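/- Let Δ₁, ..., Δ_k be d-dimensional constructible simplicial complexes such that the intersection of any two or more of them is constructible of dimension d. Then Δ₁ ∪ ⋯ ∪ Δ_k is constructible. -/

import Mathlib

open scoped BigOperators

/-- A (finite, abstract) simplicial complex on vertex set `V`:
a collection of finite subsets of `V` closed under taking subsets. -/
structure SC (V : Type*) where
  faces : Set (Finset V)
  down : ∀ ⦃s t : Finset V⦄, s ∈ faces → t ⊆ s → t ∈ faces

namespace SC

variable {V : Type*}

/-- The union of two simplicial complexes. -/
def union (Δ₁ Δ₂ : SC V) : SC V :=
  ⟨Δ₁.faces ∪ Δ₂.faces, by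
    rintro s t (h | h) hts
    · exact Or.inl (Δ₁.down h hts)
    · exact Or.inr (Δ₂.down h hts)⟩

/-- The intersection of two simplicial complexes. -/
def inter (Δ₁ Δ₂ : SC V) : SC V :=
  ⟨Δ₁.faces ∩ Δ₂.faces, fun _ _ h hts => ⟨Δ₁.down h.1 hts, Δ₂.down h.2 hts⟩⟩

/-- The simplex on a finite vertex set `s`: all subsets of `s`. -/
def simplex (s : Finset V) : SC V :=
  ⟨{t | t ⊆ s}, fun _ _ h h' => h'.trans h⟩

/-- The link of a face `F`: `{G \ F : G ∈ Δ, F ⊆ G}`. -/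
def link [DecidableEq V] (Δ : SC V) (F : Finset V) : SC V :=
  ⟨{G | Disjoint G F ∧ G ∪ F ∈ Δ.faces}, by
    rintro s t ⟨hd, hm⟩ hts
    exact ⟨hd.mono_left hts, Δ.down hm (Finset.union_subset_union hts le_rfl)⟩⟩

/-- The dimension of a simplicial complex, as an integer
(the complex `{∅}` has dimension `-1`). -/
noncomputable def dim (Δ : SC V) : ℤ :=
  sSup ((fun s : Finset V => (s.card : ℤ) - 1) '' Δ.faces)

/-- The geometric realization of a simplicial complex on a finite vertex set,
as a subspace of `V → ℝ`. -/
def realization [Fintype V] (Δ : SC V) : Set (V → ℝ) :=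
  {f | (∀ v, 0 ≤ f v) ∧ (∑ v, f v) = 1 ∧ ∃ s ∈ Δ.faces, ∀ v, f v ≠ 0 → v ∈ s}

end SC

/-- Constructibility (generalized): a `d`-dimensional complex is constructible
if it is a simplex, or the union of two `d`-dimensional constructible complexes
whose intersection is constructible of dimension at least `d - 1`. -/
inductive Constructible {V : Type*} : SC V → ℤ → Prop
  | simplex (s : Finset V) : Constructible (SC.simplex s) ((s.card : ℤ) - 1)
  | union {Δ₁ Δ₂ : SC V} {d e : ℤ} : Constructible Δ₁ d → Constructible Δ₂ d →
      d - 1 ≤ e → Constructible (SC.inter Δ₁ Δ₂) e →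
      Constructible (SC.union Δ₁ Δ₂) d

/-- A topological space is `k`-connected if it is nonempty (for `k ≥ -1`) and
all its homotopy groups `π_i` vanish for `0 ≤ i ≤ k`, at every basepoint. -/
def KConnected (k : ℤ) (X : Type*) [TopologicalSpace X] : Prop :=
  (-1 ≤ k → Nonempty X) ∧
    ∀ (x : X) (i : ℕ), (i : ℤ) ≤ k → Subsingleton (HomotopyGroup (Fin i) X x)

namespace SC

/-- The union of a finite family of simplicial complexes. -/
def unionFam {V ι : Type*} (S : Finset ι) (Δ : ι → SC V) : SC V :=
  ⟨{s | ∃ i ∈ S, s ∈ (Δ i).faces}, by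
    rintro s t ⟨i, hi, hs⟩ hts
    exact ⟨i, hi, (Δ i).down hs hts⟩⟩

/-- The intersection of a finite family of simplicial complexes. -/
def interFam {V ι : Type*} (S : Finset ι) (Δ : ι → SC V) : SC V :=
  ⟨{s | ∀ i ∈ S, s ∈ (Δ i).faces}, fun s t hs hts i hi => (Δ i).down (hs i hi) hts⟩

end SC

namespace SC

variable {V ι : Type*}

@[ext]
theorem ext {Δ₁ Δ₂ : SC V} (h : Δ₁.faces = Δ₂.faces) : Δ₁ = Δ₂ := by
  cases Δ₁; cases Δ₂; simp_all

theorem unionFam_singleton (Δ : ι → SC V) (i : ι) : unionFam {i} Δ = Δ i := by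
  ext s; simp [unionFam]

theorem unionFam_cons (Δ : ι → SC V) {a : ι} {S : Finset ι} (ha : a ∉ S) :
    unionFam (Finset.cons a S ha) Δ = union (Δ a) (unionFam S Δ) := by
  ext s; simp [unionFam, union]

theorem inter_unionFam (Γ : SC V) (Δ : ι → SC V) (S : Finset ι) :
    inter Γ (unionFam S Δ) = unionFam S (fun i => inter Γ (Δ i)) := by
  ext s
  simp only [inter, unionFam, Set.mem_inter_iff, Set.mem_ofPred_eq]
  exact ⟨fun ⟨hΓ, i, hi, hs⟩ => ⟨i, hi, hΓ, hs⟩, fun ⟨i, hi, hΓ, hs⟩ => ⟨hΓ, i, hi, hs⟩⟩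

theorem interFam_singleton (Δ : ι → SC V) (i : ι) : interFam {i} Δ = Δ i := by
  ext s; simp [interFam]

theorem interFam_cons (Δ : ι → SC V) {a : ι} {T : Finset ι} (ha : a ∉ T) (hT : T.Nonempty) :
    interFam (Finset.cons a T ha) Δ = interFam T (fun i => inter (Δ a) (Δ i)) := by
  obtain ⟨j, hj⟩ := hT
  ext s
  simp only [interFam, inter, Finset.mem_cons, forall_eq_or_imp, Set.mem_inter_iff]
  exact ⟨fun hs i hi => ⟨hs.1, hs.2 i hi⟩, fun hs => ⟨(hs j hj).1, fun i hi => (hs i hi).2⟩⟩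

end SC

/- Induction on `S`, peeling off one complex `Δ a`: its intersection with the union of the others
is the union of the family `Δ a ∩ Δ i`, whose members and multiple intersections are again
intersections of at least two of the `Δ i`, so the inductive hypothesis applies to that family too. -/
theorem Constructible.unionFam {V ι : Type*} {d : ℤ} {S : Finset ι} (hS : S.Nonempty)
    {Δ : ι → SC V} (h : ∀ i ∈ S, Constructible (Δ i) d)
    (hint : ∀ T ⊆ S, 2 ≤ T.card → Constructible (SC.interFam T Δ) d) :
    Constructible (SC.unionFam S Δ) d := by
  induction hS using Finset.Nonempty.cons_induction generalizing Δ with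
  | singleton i => simpa [SC.unionFam_singleton] using h i
  | cons a S ha hS ih =>
    have hpair : ∀ i ∈ S, Constructible (SC.inter (Δ a) (Δ i)) d := fun i hi => by
      have := hint (Finset.cons a {i} (Finset.notMem_singleton.2 fun hai => ha (hai ▸ hi)))
        (by simpa [Finset.insert_subset_iff] using hi) (by simp)
      rwa [SC.interFam_cons _ _ (Finset.singleton_nonempty i), SC.interFam_singleton] at this
    have hpairInter : ∀ T ⊆ S, 2 ≤ T.card →
        Constructible (SC.interFam T (fun i => SC.inter (Δ a) (Δ i))) d := fun T hT hcard => by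
      have := hint (Finset.cons a T fun haT => ha (hT haT)) (Finset.cons_subset_cons.2 hT)
        (by rw [Finset.card_cons]; omega)
      rwa [SC.interFam_cons _ _ (Finset.card_pos.1 (by omega))] at this
    rw [SC.unionFam_cons]
    refine .union (h a (Finset.mem_cons_self a S))
      (ih (fun i hi => h i (Finset.mem_cons_of_mem hi))
        fun T hT => hint T (hT.trans (Finset.subset_cons ha)))
      (sub_le_self d zero_le_one) ?_
    rw [SC.inter_unionFam]
    exact ih hpair hpairInter

/-- If Δ₁, …, Δ_k are d-dimensional constructible simplicial complexes such
that the intersection of any two or more of them is constructible of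
dimension d, then their union is constructible. -/
theorem constructible_unionFam_dim_d {V : Type*} (k : ℕ) (hk : 0 < k)
    (Δ : Fin k → SC V) (d : ℤ)
    (h : ∀ i, Constructible (Δ i) d)
    (hint : ∀ S : Finset (Fin k), 2 ≤ S.card →
      Constructible (SC.interFam S Δ) d) :
    Constructible (SC.unionFam Finset.univ Δ) d :=
  Constructible.unionFam (Finset.univ_nonempty_iff.mpr (Fin.pos_iff_nonempty.mp hk))
    (fun i _ => h i) (fun T _ hT => hint T hT)
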